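/- arXiv:2408.13437 — 4 statements merged into one kernel-verified Lean document; each statement's English description precedes it below -/
import Mathlib

section
/- Let E be a normed vector space, let f : [0, ∞) → E be a bounded càdlàg function (right-continuous with left limits everywhere), and let T > 0. Let (Δ_n) be a sequence of positive reals with Δ_n → 0 and (k_n) a sequence of positive integers with k_n Δ_n → 0. Then Δ_n · Σ_{i=1}^{⌊T/Δ_n⌋} ( sup_{0 ≤ u ≤ k_n Δ_n} ‖ f((i−1)Δ_n + u) − f((i−1)Δ_n) ‖ )² → 0 as n → ∞. -/
set_option maxHeartbeats 1000000


open Filter Set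

/-- **Pathwise core of Lemma A1.**
Let `f : [0,∞) → E` be a bounded càdlàg function into a normed vector space, `T > 0`,
`Δ_n → 0` positive, and `k_n ≥ 1` integers with `k_n Δ_n → 0`.  Then
`Δ_n Σ_{i=1}^{⌊T/Δ_n⌋} (sup_{0 ≤ u ≤ k_n Δ_n} ‖f((i−1)Δ_n + u) − f((i−1)Δ_n)‖)² → 0`. -/
theorem stmt_2 {E : Type*} [NormedAddCommGroup E] [NormedSpace ℝ E]
    (f : ℝ → E) (M : ℝ)
    (hbdd : ∀ t, 0 ≤ t → ‖f t‖ ≤ M)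
    (hrc : ∀ t, 0 ≤ t → ContinuousWithinAt f (Set.Ici t) t)
    (hll : ∀ t, 0 < t → ∃ l : E, Tendsto f (nhdsWithin t (Set.Iio t)) (nhds l))
    (T : ℝ) (hT : 0 < T)
    (Δ : ℕ → ℝ) (hΔpos : ∀ n, 0 < Δ n) (hΔ : Tendsto Δ atTop (nhds 0))
    (k : ℕ → ℕ) (hk : ∀ n, 1 ≤ k n)
    (hkΔ : Tendsto (fun n => (k n : ℝ) * Δ n) atTop (nhds 0)) :
    Tendsto (fun n => Δ n * ∑ i ∈ Finset.Icc 1 (Nat.floor (T / Δ n)),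
        (sSup ((fun u => ‖f (((i : ℝ) - 1) * Δ n + u) - f (((i : ℝ) - 1) * Δ n)‖) ''
          Set.Icc (0 : ℝ) ((k n : ℝ) * Δ n))) ^ 2)
      atTop (nhds 0) := by
  classical
  have hM0 : (0 : ℝ) ≤ M := (norm_nonneg _).trans (hbdd 0 le_rfl)
  rw [Metric.tendsto_nhds]
  intro ε₀ hε₀
  set ε : ℝ := Real.sqrt (ε₀ / (2 * (T + 1))) with hεdef
  have hεpos : 0 < ε := Real.sqrt_pos.mpr (by positivity)
  have hεsq : ε ^ 2 = ε₀ / (2 * (T + 1)) := Real.sq_sqrt (by positivity)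
  have hTε : T * ε ^ 2 < ε₀ / 2 := by
    rw [hεsq]
    have h2 : T * (ε₀ / (2 * (T + 1))) = (T / (T + 1)) * (ε₀ / 2) := by
      field_simp
    rw [h2]
    have h3 : T / (T + 1) < 1 := (div_lt_one (by linarith)).mpr (by linarith)
    nlinarith
  -- Local structure of a càdlàg function near a point `t ≥ 0`.
  have cover : ∀ t : ℝ, ∃ ρ : ℝ, 0 < ρ ∧ (0 ≤ t → ∀ s v : ℝ, 0 ≤ s → s ≤ v →
      |s - t| < ρ → |v - t| < ρ → (t ≤ s ∨ v < t) → ‖f v - f s‖ ≤ ε) := by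
    intro t
    by_cases ht : 0 ≤ t
    · have h1 : {x | dist (f x) (f t) ≤ ε / 2} ∈ nhdsWithin t (Set.Ici t) :=
        hrc t ht (Metric.closedBall_mem_nhds (f t) (by positivity))
      rw [Metric.mem_nhdsWithin_iff] at h1
      obtain ⟨r, hr, hrsub⟩ := h1
      rcases eq_or_lt_of_le ht with h0 | hpos
      · refine ⟨r, hr, fun _ s v hs hsv h1s h1v _ => ?_⟩
        have hts : t ≤ s := h0 ▸ hs
        have h2 : dist (f s) (f t) ≤ ε / 2 :=
          hrsub ⟨by rwa [Metric.mem_ball, Real.dist_eq], hts⟩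
        have h3 : dist (f v) (f t) ≤ ε / 2 :=
          hrsub ⟨by rwa [Metric.mem_ball, Real.dist_eq], hts.trans hsv⟩
        have := dist_triangle (f v) (f t) (f s)
        rw [dist_comm (f t) (f s)] at this
        rw [← dist_eq_norm]
        linarith
      · obtain ⟨L, hL⟩ := hll t hpos
        have h2 : {x | dist (f x) L ≤ ε / 2} ∈ nhdsWithin t (Set.Iio t) :=
          hL (Metric.closedBall_mem_nhds L (by positivity))
        rw [Metric.mem_nhdsWithin_iff] at h2
        obtain ⟨l, hl, hlsub⟩ := h2
        refine ⟨min r l, lt_min hr hl, fun _ s v hs hsv h1s h1v hcase => ?_⟩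
        rcases hcase with hts | hvt
        · have h2 : dist (f s) (f t) ≤ ε / 2 :=
            hrsub ⟨by rw [Metric.mem_ball, Real.dist_eq]; exact h1s.trans_le (min_le_left _ _), hts⟩
          have h3 : dist (f v) (f t) ≤ ε / 2 :=
            hrsub ⟨by rw [Metric.mem_ball, Real.dist_eq]; exact h1v.trans_le (min_le_left _ _),
              hts.trans hsv⟩
          have := dist_triangle (f v) (f t) (f s)
          rw [dist_comm (f t) (f s)] at this
          rw [← dist_eq_norm]
          linarith
        · have h2 : dist (f s) L ≤ ε / 2 :=
            hlsub ⟨by rw [Metric.mem_ball, Real.dist_eq]; exact h1s.trans_le (min_le_right _ _),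
              hsv.trans_lt hvt⟩
          have h3 : dist (f v) L ≤ ε / 2 :=
            hlsub ⟨by rw [Metric.mem_ball, Real.dist_eq]; exact h1v.trans_le (min_le_right _ _),
              hvt⟩
          have := dist_triangle (f v) L (f s)
          rw [dist_comm L (f s)] at this
          rw [← dist_eq_norm]
          linarith
    · exact ⟨1, one_pos, fun h => absurd h ht⟩
  choose ρ hρpos hρ using cover
  -- Compactness: finite subcover of `[0, T+1]` by the balls `ball t (ρ t)`.
  have hK : IsCompact (Set.Icc (0 : ℝ) (T + 1)) := isCompact_Icc
  obtain ⟨D, hD⟩ := hK.elim_finite_subcover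
      (fun t : Set.Icc (0 : ℝ) (T + 1) => Metric.ball (t : ℝ) (ρ t))
      (fun _ => Metric.isOpen_ball)
      (fun x hx => Set.mem_iUnion.mpr ⟨⟨x, hx⟩, Metric.mem_ball_self (hρpos _)⟩)
  -- Lebesgue number for the finite subcover.
  obtain ⟨δ, hδpos, hδ⟩ := lebesgue_number_lemma_of_metric (ι := {i // i ∈ D})
      (c := fun i => Metric.ball (i.1 : ℝ) (ρ i.1)) hK (fun _ => Metric.isOpen_ball)
      (by
        intro x hx
        obtain ⟨t, ht, hxt⟩ := Set.mem_iUnion₂.mp (hD hx)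
        exact Set.mem_iUnion.mpr ⟨⟨t, ht⟩, hxt⟩)
  -- The finite set of "bad" centers, as reals.
  set Dr : Finset ℝ := D.image (fun t : Set.Icc (0:ℝ) (T+1) => (t : ℝ)) with hDr
  -- Eventual smallness of the windows and of the bad contribution.
  have hc : 0 < ε₀ - T * ε ^ 2 := by linarith
  have hkΔ1 : Tendsto (fun n => ((Dr.card : ℝ) * (2 * M) ^ 2) * (((k n : ℝ) + 1) * Δ n))
      atTop (nhds 0) := by
    have h1 : Tendsto (fun n => ((k n : ℝ) + 1) * Δ n) atTop (nhds 0) := by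
      have := hkΔ.add hΔ
      rw [add_zero] at this
      refine this.congr (fun n => by ring)
    have := h1.const_mul ((Dr.card : ℝ) * (2 * M) ^ 2)
    rwa [mul_zero] at this
  have hev1 : ∀ᶠ n in atTop, ((Dr.card : ℝ) * (2 * M) ^ 2) * (((k n : ℝ) + 1) * Δ n)
      < ε₀ - T * ε ^ 2 := hkΔ1.eventually_lt_const hc
  have hev2 : ∀ᶠ n in atTop, (k n : ℝ) * Δ n < δ := hkΔ.eventually_lt_const hδpos
  filter_upwards [hev1, hev2] with n hbadsmall hwin
  -- Fix `n`.  Notation.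
  set Δn : ℝ := Δ n with hΔn
  have hΔnpos : 0 < Δn := hΔpos n
  set hn : ℝ := (k n : ℝ) * Δn with hhn
  have hhnpos : 0 < hn := mul_pos (by exact_mod_cast Nat.cast_pos.mpr (hk n)) hΔnpos
  set N : ℕ := Nat.floor (T / Δn) with hN
  have hNΔ : (N : ℝ) * Δn ≤ T := by
    have h1 : (N : ℝ) ≤ T / Δn := Nat.floor_le (by positivity)
    calc (N : ℝ) * Δn ≤ (T / Δn) * Δn := by nlinarith
    _ = T := by field_simp
  -- Per-window quantities.
  set g : ℕ → ℝ := fun i =>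
    (sSup ((fun u => ‖f (((i : ℝ) - 1) * Δn + u) - f (((i : ℝ) - 1) * Δn)‖) ''
      Set.Icc (0 : ℝ) hn)) ^ 2 with hg
  -- basic facts about window starts
  have hstart : ∀ i ∈ Finset.Icc 1 N, 0 ≤ ((i : ℝ) - 1) * Δn ∧ ((i : ℝ) - 1) * Δn ≤ T := by
    intro i hi
    rw [Finset.mem_Icc] at hi
    have h1 : (1 : ℝ) ≤ (i : ℝ) := by exact_mod_cast hi.1
    have h2 : (i : ℝ) ≤ (N : ℝ) := by exact_mod_cast hi.2
    constructor
    · nlinarith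
    · nlinarith
  -- Every window supremum is at most `2 M`.
  have hsup2M : ∀ i ∈ Finset.Icc 1 N, g i ≤ (2 * M) ^ 2 := by
    intro i hi
    have hs0 := (hstart i hi).1
    have hle : sSup ((fun u => ‖f (((i : ℝ) - 1) * Δn + u) - f (((i : ℝ) - 1) * Δn)‖) ''
        Set.Icc (0 : ℝ) hn) ≤ 2 * M := by
      refine Real.sSup_le ?_ (by linarith)
      rintro x ⟨u, hu, rfl⟩
      have h1 : ‖f (((i : ℝ) - 1) * Δn + u)‖ ≤ M := hbdd _ (by linarith [hu.1])
      have h2 : ‖f (((i : ℝ) - 1) * Δn)‖ ≤ M := hbdd _ hs0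
      calc ‖f (((i : ℝ) - 1) * Δn + u) - f (((i : ℝ) - 1) * Δn)‖
          ≤ ‖f (((i : ℝ) - 1) * Δn + u)‖ + ‖f (((i : ℝ) - 1) * Δn)‖ := norm_sub_le _ _
        _ ≤ 2 * M := by linarith
    have hnn : 0 ≤ sSup ((fun u => ‖f (((i : ℝ) - 1) * Δn + u) - f (((i : ℝ) - 1) * Δn)‖) ''
        Set.Icc (0 : ℝ) hn) := Real.sSup_nonneg (by rintro x ⟨u, hu, rfl⟩; exact norm_nonneg _)
    exact pow_le_pow_left₀ hnn hle 2
  -- "bad" windows: those crossing one of the finitely many centers.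
  set bad : Finset ℕ := (Finset.Icc 1 N).filter
    (fun i => ∃ t ∈ Dr, ((i : ℝ) - 1) * Δn < t ∧ t ≤ ((i : ℝ) - 1) * Δn + hn) with hbad
  -- Good windows have small oscillation.
  have hgood : ∀ i ∈ Finset.Icc 1 N, i ∉ bad → g i ≤ ε ^ 2 := by
    intro i hi hnotbad
    have hs0 := (hstart i hi).1
    have hsT := (hstart i hi).2
    set s : ℝ := ((i : ℝ) - 1) * Δn with hs
    obtain ⟨j, hball⟩ := hδ s ⟨hs0, by linarith⟩
    have htmem : (j.1 : ℝ) ∈ Dr := by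
      rw [hDr]
      exact Finset.mem_image_of_mem _ j.2
    have hnocross : ¬(s < (j.1 : ℝ) ∧ (j.1 : ℝ) ≤ s + hn) := by
      rw [hbad, Finset.mem_filter] at hnotbad
      intro hcr
      exact hnotbad ⟨hi, ⟨(j.1 : ℝ), htmem, hcr.1, hcr.2⟩⟩
    have hle : sSup ((fun u => ‖f (s + u) - f s‖) '' Set.Icc (0 : ℝ) hn) ≤ ε := by
      refine Real.sSup_le ?_ hεpos.le
      rintro x ⟨u, hu, rfl⟩
      have hsmem : s ∈ Metric.ball s δ := Metric.mem_ball_self hδpos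
      have hvmem : s + u ∈ Metric.ball s δ := by
        rw [Metric.mem_ball, Real.dist_eq]
        rw [abs_of_nonneg (by linarith [hu.1] : (0:ℝ) ≤ s + u - s)]
        linarith [hu.2]
      have h1 := hball hsmem
      have h2 := hball hvmem
      rw [Metric.mem_ball, Real.dist_eq] at h1 h2
      have hcase : (j.1 : ℝ) ≤ s ∨ s + u < (j.1 : ℝ) := by
        by_cases hc : (j.1 : ℝ) ≤ s
        · exact Or.inl hc
        · push_neg at hc
          push_neg at hnocross
          right
          have := hnocross hc
          linarith [hu.2]
      exact hρ (j.1 : ℝ) j.1.2.1 s (s + u) hs0 (by linarith [hu.1]) h1 h2 hcase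
    have hnn : 0 ≤ sSup ((fun u => ‖f (s + u) - f s‖) '' Set.Icc (0 : ℝ) hn) :=
      Real.sSup_nonneg (by rintro x ⟨u, hu, rfl⟩; exact norm_nonneg _)
    exact pow_le_pow_left₀ hnn hle 2
  -- Counting the bad windows.
  have hbadcard : (bad.card : ℝ) ≤ (Dr.card : ℝ) * ((k n : ℝ) + 1) := by
    have hsub : bad ⊆ Dr.biUnion (fun t =>
        Finset.Icc (Nat.floor (t / Δn) + 1 - k n) (Nat.floor (t / Δn) + 1)) := by
      intro i hi
      rw [hbad, Finset.mem_filter] at hi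
      obtain ⟨hiIcc, t, htD, hlt, hle⟩ := hi
      rw [Finset.mem_Icc] at hiIcc
      have h1 : (1 : ℝ) ≤ (i : ℝ) := by exact_mod_cast hiIcc.1
      refine Finset.mem_biUnion.mpr ⟨t, htD, ?_⟩
      rw [Finset.mem_Icc]
      constructor
      · -- lower bound : Nat.floor (t/Δn) + 1 - k n ≤ i
        have hup : t / Δn ≤ (i : ℝ) - 1 + (k n : ℝ) := by
          rw [div_le_iff₀ hΔnpos]
          calc t ≤ ((i : ℝ) - 1) * Δn + hn := hle
            _ = ((i : ℝ) - 1 + (k n : ℝ)) * Δn := by rw [hhn]; ring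
        have hfl : Nat.floor (t / Δn) ≤ (i - 1) + k n := by
          have : t / Δn ≤ (((i - 1) + k n : ℕ) : ℝ) := by
            push_cast
            have : (1:ℕ) ≤ i := hiIcc.1
            push_cast [Nat.cast_sub this]
            linarith [hup]
          calc Nat.floor (t / Δn) ≤ Nat.floor ((((i - 1) + k n : ℕ) : ℝ)) :=
              Nat.floor_mono this
            _ = (i - 1) + k n := Nat.floor_natCast _
        omega
      · -- upper bound : i ≤ Nat.floor (t/Δn) + 1
        have hlow : ((i : ℝ) - 1) ≤ t / Δn := by
          rw [le_div_iff₀ hΔnpos]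
          linarith [hlt]
        have : ((i - 1 : ℕ) : ℝ) ≤ t / Δn := by
          have h1n : (1:ℕ) ≤ i := hiIcc.1
          push_cast [Nat.cast_sub h1n]
          linarith
        have := Nat.le_floor this
        omega
    have hcount : (Dr.biUnion (fun t =>
        Finset.Icc (Nat.floor (t / Δn) + 1 - k n) (Nat.floor (t / Δn) + 1))).card
        ≤ Dr.card * (k n + 1) := by
      calc (Dr.biUnion _).card ≤ ∑ t ∈ Dr, (Finset.Icc (Nat.floor (t / Δn) + 1 - k n)
          (Nat.floor (t / Δn) + 1)).card := Finset.card_biUnion_le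
        _ ≤ ∑ _t ∈ Dr, (k n + 1) := by
            refine Finset.sum_le_sum (fun t _ => ?_)
            rw [Nat.card_Icc]
            omega
        _ = Dr.card * (k n + 1) := by rw [Finset.sum_const, smul_eq_mul]
    have := (Finset.card_le_card hsub).trans hcount
    exact_mod_cast this
  -- Put everything together.
  have hsum : ∑ i ∈ Finset.Icc 1 N, g i
      ≤ (bad.card : ℝ) * (2 * M) ^ 2 + (N : ℝ) * ε ^ 2 := by
    have hsplit : ∑ i ∈ (Finset.Icc 1 N) \ bad, g i + ∑ i ∈ bad, g i
        = ∑ i ∈ Finset.Icc 1 N, g i :=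
      Finset.sum_sdiff (Finset.filter_subset _ _)
    have h1 : ∑ i ∈ bad, g i ≤ (bad.card : ℝ) * (2 * M) ^ 2 := by
      have := Finset.sum_le_card_nsmul bad g ((2 * M) ^ 2)
        (fun i hi => hsup2M i (Finset.mem_of_mem_filter i hi))
      simpa [nsmul_eq_mul] using this
    have h2 : ∑ i ∈ (Finset.Icc 1 N) \ bad, g i ≤ (N : ℝ) * ε ^ 2 := by
      have hb := Finset.sum_le_card_nsmul ((Finset.Icc 1 N) \ bad) g (ε ^ 2)
        (fun i hi => hgood i (Finset.mem_sdiff.mp hi).1 (Finset.mem_sdiff.mp hi).2)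
      have hcard : (((Finset.Icc 1 N) \ bad).card : ℝ) ≤ (N : ℝ) := by
        have := Finset.card_le_card (Finset.sdiff_subset (s := Finset.Icc 1 N) (t := bad))
        have h3 : (Finset.Icc 1 N).card = N := by rw [Nat.card_Icc]; omega
        exact_mod_cast h3 ▸ this
      have hss : ∑ i ∈ (Finset.Icc 1 N) \ bad, g i
          ≤ (((Finset.Icc 1 N) \ bad).card : ℝ) * ε ^ 2 := by
        simpa [nsmul_eq_mul] using hb
      nlinarith [sq_nonneg ε]
    linarith
  -- nonnegativity of each term
  have hgnn : ∀ i ∈ Finset.Icc 1 N, 0 ≤ g i := fun i _ => sq_nonneg _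
  have hsumnn : 0 ≤ ∑ i ∈ Finset.Icc 1 N, g i := Finset.sum_nonneg hgnn
  show dist (Δn * ∑ i ∈ Finset.Icc 1 N, g i) 0 < ε₀
  rw [dist_zero_right, Real.norm_eq_abs, abs_of_nonneg (by positivity)]
  have hfinal : Δn * ∑ i ∈ Finset.Icc 1 N, g i
      ≤ ((Dr.card : ℝ) * (2 * M) ^ 2) * (((k n : ℝ) + 1) * Δn) + T * ε ^ 2 := by
    have hstep : Δn * ∑ i ∈ Finset.Icc 1 N, g i
        ≤ Δn * ((bad.card : ℝ) * (2 * M) ^ 2 + (N : ℝ) * ε ^ 2) := by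
      nlinarith
    have h1 : Δn * ((bad.card : ℝ) * (2 * M) ^ 2)
        ≤ ((Dr.card : ℝ) * (2 * M) ^ 2) * (((k n : ℝ) + 1) * Δn) := by
      have := mul_le_mul_of_nonneg_right hbadcard
        (by positivity : (0:ℝ) ≤ Δn * (2 * M) ^ 2)
      nlinarith [this]
    have h2 : Δn * ((N : ℝ) * ε ^ 2) ≤ T * ε ^ 2 := by
      nlinarith [sq_nonneg ε]
    nlinarith
  linarith [hbadsmall]
end

section
/- Fix an integer k ≥ 1 and define ε(1)_q = −1 if 0 ≤ q < k and ε(1)_q = +1 if k ≤ q < 2k, and λ(1,1)_m = (3/(2k³)) Σ_{q=0}^{2k−m−1} ε(1)_q ε(1)_{q+m} for 0 ≤ m ≤ 2k−1. Then for every k ≥ 1, k³ · Σ_{m=1}^{2k−1} (λ(1,1)_m)² = 3 − 9/(2k) + 15/(4k²). In particular, k³ · Σ_{m=1}^{2k−1} (λ(1,1)_m)² → 3 as k → ∞. -/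
/-!
For `m ≤ k` the products `ε(1)_q ε(1)_{q+m}` are `+1` on two blocks of length `k − m` and `−1`
on a block of length `m`, so the autocorrelation equals `2k − 3m`; for `m > k` every product is
`−1`, giving `m − 2k`. Hence `Σ_{m=1}^{2k−1}` of its square is a sum of squares of two arithmetic
progressions, namely `(4k³ − 6k² + 5k)/3`, and multiplying by `k³ (3/(2k³))²` gives the formula.
-/

open Filter

/-- The weight sequence `ε(1)_q`: equal to `−1` for `0 ≤ q < k` and `+1` for `k ≤ q < 2k`. -/
noncomputable def eps1 (k q : ℕ) : ℝ := if q < k then -1 else 1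

/-- The weight `λ(1,1)_m = (3/(2k³)) Σ_{q=0}^{2k−m−1} ε(1)_q ε(1)_{q+m}`. -/
noncomputable def lam11 (k m : ℕ) : ℝ :=
  (3 / (2 * (k : ℝ) ^ 3)) * ∑ q ∈ Finset.range (2 * k - m), eps1 k q * eps1 k (q + m)

open Finset

lemma sum_range_affine_sq (a b : ℝ) (n : ℕ) :
    ∑ q ∈ range n, (a + b * q) ^ 2
      = n * a ^ 2 + a * b * (n * (n - 1)) + b ^ 2 * (n * (n - 1) * (2 * n - 1) / 6) := by
  induction n with
  | zero => simp
  | succ n ih =>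
    rw [sum_range_succ, ih]
    push_cast
    ring

lemma sum_Ico_eq_card_mul {R : Type*} [NonAssocSemiring R] {f : ℕ → R} {a b : ℕ} {c : R}
    (h : ∀ q ∈ Ico a b, f q = c) :
    ∑ q ∈ Ico a b, f q = ((b - a : ℕ) : R) * c := by
  rw [sum_eq_card_nsmul h, Nat.card_Ico, nsmul_eq_mul]

noncomputable def eps1Autocorr (k m : ℕ) : ℝ :=
  ∑ q ∈ range (2 * k - m), eps1 k q * eps1 k (q + m)

lemma lam11_eq (k m : ℕ) : lam11 k m = 3 / (2 * (k : ℝ) ^ 3) * eps1Autocorr k m := rfl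

lemma eps1Autocorr_of_le {k m : ℕ} (hm : m ≤ k) : eps1Autocorr k m = 2 * k - 3 * m := by
  rw [eps1Autocorr, range_eq_Ico,
    ← sum_Ico_consecutive _ (Nat.zero_le k) (by omega : k ≤ 2 * k - m),
    ← sum_Ico_consecutive _ (Nat.zero_le (k - m)) (Nat.sub_le k m)]
  have hlow : ∑ q ∈ Ico 0 (k - m), eps1 k q * eps1 k (q + m) = ((k - m - 0 : ℕ) : ℝ) * 1 :=
    sum_Ico_eq_card_mul fun q hq ↦ by
      simp [eps1, (mem_Ico.1 hq).2.trans_le (Nat.sub_le k m), show q + m < k by grind]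
  have hmid : ∑ q ∈ Ico (k - m) k, eps1 k q * eps1 k (q + m) = ((k - (k - m) : ℕ) : ℝ) * (-1) :=
    sum_Ico_eq_card_mul fun q hq ↦ by
      simp [eps1, (mem_Ico.1 hq).2, show ¬ q + m < k by grind]
  have hhigh : ∑ q ∈ Ico k (2 * k - m), eps1 k q * eps1 k (q + m)
      = ((2 * k - m - k : ℕ) : ℝ) * 1 :=
    sum_Ico_eq_card_mul fun q hq ↦ by
      simp [eps1, show ¬ q < k by grind, show ¬ q + m < k by grind]
  rw [hlow, hmid, hhigh, show 2 * k - m - k = k - m by omega, Nat.sub_sub_self hm,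
    Nat.sub_zero, Nat.cast_sub hm]
  ring

lemma eps1Autocorr_of_lt {k m : ℕ} (hm : k < m) : eps1Autocorr k m = -((2 * k - m : ℕ) : ℝ) := by
  rw [eps1Autocorr, range_eq_Ico, sum_Ico_eq_card_mul (c := -1) fun q hq ↦ by
    simp [eps1, show q < k by grind, show ¬ q + m < k by omega]]
  simp

lemma sum_eps1Autocorr_sq {k : ℕ} (hk : 1 ≤ k) :
    ∑ m ∈ Icc 1 (2 * k - 1), eps1Autocorr k m ^ 2 = (4 * k ^ 3 - 6 * k ^ 2 + 5 * k) / 3 := by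
  rw [show Icc 1 (2 * k - 1) = Ico 1 (2 * k) by ext; simp; omega,
    ← sum_Ico_consecutive _ (by omega : 1 ≤ k + 1) (by omega : k + 1 ≤ 2 * k),
    sum_Ico_eq_sum_range, sum_Ico_eq_sum_range, show 2 * k - (k + 1) = k - 1 by omega,
    Nat.add_sub_cancel]
  have hle : ∑ q ∈ range k, eps1Autocorr k (1 + q) ^ 2
      = ∑ q ∈ range k, ((2 * k - 3 : ℝ) + (-3) * q) ^ 2 :=
    sum_congr rfl fun q hq ↦ by
      rw [eps1Autocorr_of_le (by simp at hq; omega)]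
      push_cast
      ring
  have hlt : ∑ q ∈ range (k - 1), eps1Autocorr k (k + 1 + q) ^ 2
      = ∑ q ∈ range (k - 1), ((k - 1 : ℝ) + (-1) * q) ^ 2 :=
    sum_congr rfl fun q hq ↦ by
      simp only [mem_range] at hq
      rw [eps1Autocorr_of_lt (by omega), show 2 * k - (k + 1 + q) = k - 1 - q by omega,
        Nat.cast_sub (by omega), Nat.cast_sub hk]
      ring
  rw [hle, hlt, sum_range_affine_sq, sum_range_affine_sq, Nat.cast_sub hk]
  push_cast
  ring

lemma cube_mul_sum_lam11_sq {k : ℕ} (hk : 1 ≤ k) :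
    (k : ℝ) ^ 3 * ∑ m ∈ Icc 1 (2 * k - 1), lam11 k m ^ 2
      = 3 - 9 / (2 * (k : ℝ)) + 15 / (4 * (k : ℝ) ^ 2) := by
  have hk₀ : (k : ℝ) ≠ 0 := by positivity
  simp only [lam11_eq, mul_pow, ← mul_sum, sum_eps1Autocorr_sq hk]
  field_simp
  ring

lemma tendsto_three_sub_div_add_div :
    Tendsto (fun n : ℕ ↦ 3 - 9 / (2 * (n : ℝ)) + 15 / (4 * (n : ℝ) ^ 2)) atTop (nhds 3) := by
  have h₁ : Tendsto (fun n : ℕ ↦ 9 / (2 * (n : ℝ))) atTop (nhds 0) :=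
    tendsto_const_nhds.div_atTop (tendsto_natCast_atTop_atTop.const_mul_atTop two_pos)
  have h₂ : Tendsto (fun n : ℕ ↦ 15 / (4 * (n : ℝ) ^ 2)) atTop (nhds 0) :=
    tendsto_const_nhds.div_atTop
      (((tendsto_pow_atTop two_ne_zero).comp tendsto_natCast_atTop_atTop).const_mul_atTop
        four_pos)
  simpa using (tendsto_const_nhds.sub h₁).add h₂

/-- **Exact evaluation of `k³ Σ_{m=1}^{2k−1} λ(1,1)_m²` (proofs of Theorem 1 of the paper).**
For every `k ≥ 1`, `k³ Σ_{m=1}^{2k−1} λ(1,1)_m² = 3 − 9/(2k) + 15/(4k²)`; in particular it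
tends to `3` as `k → ∞`. -/
theorem stmt_12 (k : ℕ) (hk : 1 ≤ k) :
    ((k : ℝ) ^ 3 * ∑ m ∈ Finset.Icc 1 (2 * k - 1), (lam11 k m) ^ 2
        = 3 - 9 / (2 * (k : ℝ)) + 15 / (4 * (k : ℝ) ^ 2)) ∧
    Tendsto (fun n : ℕ => (n : ℝ) ^ 3 * ∑ m ∈ Finset.Icc 1 (2 * n - 1), (lam11 n m) ^ 2)
      atTop (nhds 3) :=
  ⟨cube_mul_sum_lam11_sq hk, tendsto_three_sub_div_add_div.congr' <|
    eventually_atTop.2 ⟨1, fun _ hn ↦ (cube_mul_sum_lam11_sq hn).symm⟩⟩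
end

section
/- Define T(x) = min(x, 2−x) for x ∈ [0,2] and, for y ∈ [0,2], h(y) = ∫_0^{2−y} T(x) · T(x+y) dx. Then ∫_0^2 h(y)² dy = 151/630. -/
open MeasureTheory intervalIntegral Set

private lemma ftc7 (a b c0 c1 c2 c3 c4 c5 c6 : ℝ) :
    (∫ x in a..b, (c0 + c1*x + c2*x^2 + c3*x^3 + c4*x^4 + c5*x^5 + c6*x^6))
      = (c0*b + c1*b^2/2 + c2*b^3/3 + c3*b^4/4 + c4*b^5/5 + c5*b^6/6 + c6*b^7/7)
        - (c0*a + c1*a^2/2 + c2*a^3/3 + c3*a^4/4 + c4*a^5/5 + c5*a^6/6 + c6*a^7/7) := by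
  apply intervalIntegral.integral_eq_sub_of_hasDerivAt
  · intro x _
    have H := ((((((((hasDerivAt_id x).const_mul c0).add
        (((hasDerivAt_pow 2 x).const_mul c1).div_const 2)).add
        (((hasDerivAt_pow 3 x).const_mul c2).div_const 3)).add
        (((hasDerivAt_pow 4 x).const_mul c3).div_const 4)).add
        (((hasDerivAt_pow 5 x).const_mul c4).div_const 5)).add
        (((hasDerivAt_pow 6 x).const_mul c5).div_const 6)).add
        (((hasDerivAt_pow 7 x).const_mul c6).div_const 7))
    convert H using 1
    · funext y; simp only [Pi.add_apply, id]
    · push_cast; ring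
  · apply Continuous.intervalIntegrable
    fun_prop

private lemma inner1 (y : ℝ) (h0 : 0 ≤ y) (h1 : y ≤ 1) :
    (∫ x in (0:ℝ)..(2 - y), min x (2 - x) * min (x + y) (2 - (x + y)))
      = 2/3 - y^2 + y^3/2 := by
  have hc : Continuous (fun x : ℝ => min x (2 - x) * min (x + y) (2 - (x + y))) := by
    apply Continuous.mul <;> exact Continuous.min (by fun_prop) (by fun_prop)
  have hsplit2 : (∫ x in (1:ℝ)..(2 - y), min x (2 - x) * min (x + y) (2 - (x + y)))
      = ∫ x in (1:ℝ)..(2-y), ((4 - 2*y) + (-(4 - y))*x + 1*x^2 + 0*x^3 + 0*x^4 + 0*x^5 + 0*x^6) := by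
    apply intervalIntegral.integral_congr
    intro x hx
    rw [Set.uIcc_of_le (by linarith)] at hx
    obtain ⟨hx1, hx2⟩ := hx
    dsimp only
    rw [min_eq_right (by linarith), min_eq_right (by linarith)]
    ring
  have hsplit1 : (∫ x in (0:ℝ)..1, min x (2 - x) * min (x + y) (2 - (x + y)))
      = (∫ x in (0:ℝ)..(1-y), min x (2 - x) * min (x + y) (2 - (x + y)))
        + ∫ x in (1-y:ℝ)..1, min x (2 - x) * min (x + y) (2 - (x + y)) := by
    rw [intervalIntegral.integral_add_adjacent_intervals] <;>
      exact hc.intervalIntegrable _ _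
  have ha : (∫ x in (0:ℝ)..(1-y), min x (2 - x) * min (x + y) (2 - (x + y)))
      = ∫ x in (0:ℝ)..(1-y), ((0:ℝ) + y*x + 1*x^2 + 0*x^3 + 0*x^4 + 0*x^5 + 0*x^6) := by
    apply intervalIntegral.integral_congr
    intro x hx
    rw [Set.uIcc_of_le (by linarith)] at hx
    obtain ⟨hx1, hx2⟩ := hx
    dsimp only
    rw [min_eq_left (by linarith), min_eq_left (by linarith)]
    ring
  have hb : (∫ x in (1-y:ℝ)..1, min x (2 - x) * min (x + y) (2 - (x + y)))
      = ∫ x in (1-y:ℝ)..1, ((0:ℝ) + (2-y)*x + (-1)*x^2 + 0*x^3 + 0*x^4 + 0*x^5 + 0*x^6) := by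
    apply intervalIntegral.integral_congr
    intro x hx
    rw [Set.uIcc_of_le (by linarith)] at hx
    obtain ⟨hx1, hx2⟩ := hx
    dsimp only
    rw [min_eq_left (by linarith), min_eq_right (by linarith)]
    ring
  have hS : (∫ x in (0:ℝ)..(2-y), min x (2 - x) * min (x + y) (2 - (x + y)))
      = (∫ x in (0:ℝ)..1, min x (2 - x) * min (x + y) (2 - (x + y)))
        + ∫ x in (1:ℝ)..(2-y), min x (2 - x) * min (x + y) (2 - (x + y)) := by
    rw [intervalIntegral.integral_add_adjacent_intervals] <;>
      exact hc.intervalIntegrable _ _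
  rw [hS, hsplit1, hsplit2, ha, hb, ftc7, ftc7, ftc7]
  ring

private lemma inner2 (y : ℝ) (h1 : 1 ≤ y) (h2 : y ≤ 2) :
    (∫ x in (0:ℝ)..(2 - y), min x (2 - x) * min (x + y) (2 - (x + y)))
      = (2 - y)^3 / 6 := by
  have ha : (∫ x in (0:ℝ)..(2-y), min x (2 - x) * min (x + y) (2 - (x + y)))
      = ∫ x in (0:ℝ)..(2-y), ((0:ℝ) + (2-y)*x + (-1)*x^2 + 0*x^3 + 0*x^4 + 0*x^5 + 0*x^6) := by
    apply intervalIntegral.integral_congr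
    intro x hx
    rw [Set.uIcc_of_le (by linarith)] at hx
    obtain ⟨hx1, hx2⟩ := hx
    dsimp only
    rw [min_eq_left (by linarith), min_eq_right (by linarith)]
    ring
  rw [ha, ftc7]
  ring

/-- **Continuum autocorrelation integral of the triangular profile `T(x) = min(x, 2−x)`
(behind the constant `151/280` in Theorem 1 of the paper).**
With `h(y) = ∫_0^{2−y} T(x) T(x+y) dx` for `y ∈ [0,2]`, one has `∫_0^2 h(y)² dy = 151/630`. -/
theorem stmt_18 :
    (∫ y in (0:ℝ)..2,
        (∫ x in (0:ℝ)..(2 - y), min x (2 - x) * min (x + y) (2 - (x + y))) ^ 2)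
      = 151 / 630 := by
  set f : ℝ → ℝ := fun y =>
    (∫ x in (0:ℝ)..(2 - y), min x (2 - x) * min (x + y) (2 - (x + y))) ^ 2 with hf
  have e1 : EqOn f (fun y => (4/9 : ℝ) + 0*y + (-(4/3))*y^2 + (2/3)*y^3 + 1*y^4 + (-1)*y^5 + (1/4)*y^6)
      (Set.uIcc (0:ℝ) 1) := by
    intro y hy
    rw [Set.uIcc_of_le (by norm_num)] at hy
    simp only [hf]
    rw [inner1 y hy.1 hy.2]
    ring
  have e2 : EqOn f (fun y => (16/9 : ℝ) + (-(16/3))*y + (20/3)*y^2 + (-(40/9))*y^3 + (5/3)*y^4 + (-(1/3))*y^5 + (1/36)*y^6)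
      (Set.uIcc (1:ℝ) 2) := by
    intro y hy
    rw [Set.uIcc_of_le (by norm_num)] at hy
    simp only [hf]
    rw [inner2 y hy.1 hy.2]
    ring
  have i1 : IntervalIntegrable f volume 0 1 := by
    have hcont : Continuous (fun y : ℝ => (4/9 : ℝ) + 0*y + (-(4/3))*y^2 + (2/3)*y^3 + 1*y^4 + (-1)*y^5 + (1/4)*y^6) := by fun_prop
    apply IntervalIntegrable.congr_ae (hcont.intervalIntegrable 0 1)
    exact ((ae_restrict_mem measurableSet_uIoc).mono
      (fun y hy => (e1 (Set.uIoc_subset_uIcc hy)).symm))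
  have i2 : IntervalIntegrable f volume 1 2 := by
    have hcont : Continuous (fun y : ℝ => (16/9 : ℝ) + (-(16/3))*y + (20/3)*y^2 + (-(40/9))*y^3 + (5/3)*y^4 + (-(1/3))*y^5 + (1/36)*y^6) := by fun_prop
    apply IntervalIntegrable.congr_ae (hcont.intervalIntegrable 1 2)
    exact ((ae_restrict_mem measurableSet_uIoc).mono
      (fun y hy => (e2 (Set.uIoc_subset_uIcc hy)).symm))
  have hsplit : (∫ y in (0:ℝ)..2, f y) = (∫ y in (0:ℝ)..1, f y) + ∫ y in (1:ℝ)..2, f y := by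
    rw [intervalIntegral.integral_add_adjacent_intervals i1 i2]
  rw [hsplit, intervalIntegral.integral_congr e1, intervalIntegral.integral_congr e2,
    ftc7, ftc7]
  norm_num
end

section
/- Define T(x) = min(x, 2−x) for x ∈ [0,2], σ(x) = −1 for x ∈ [0,1) and σ(x) = +1 for x ∈ [1,2), and, for y ∈ [0,2], φ(y) = ∫_0^{2−y} σ(x) · T(x+y) dx. Then ∫_0^2 φ(y)² dy = 1/3. -/
open MeasureTheory intervalIntegral Set

/-- integrals agree if functions agree off a single point -/
lemma key1 (a b c : ℝ) (f g : ℝ → ℝ)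
    (h : ∀ x ∈ Set.uIoc a b, x ≠ c → f x = g x) :
    ∫ x in a..b, f x = ∫ x in a..b, g x := by
  apply intervalIntegral.integral_congr_ae
  rw [MeasureTheory.ae_iff]
  apply measure_mono_null _ (measure_singleton c)
  intro x hx
  simp only [Set.mem_setOf_eq, Classical.not_imp] at hx
  by_contra hne
  exact hx.2 (h x hx.1 hne)

lemma key2 (a b c d : ℝ) : ∫ x in a..b, (c*x + d) = c*(b^2-a^2)/2 + d*(b-a) := by
  rw [intervalIntegral.integral_add
      ((by continuity : Continuous fun x : ℝ => c*x).intervalIntegrable _ _)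
      (continuous_const.intervalIntegrable _ _),
    intervalIntegral.integral_const_mul, integral_id, intervalIntegral.integral_const]
  simp [smul_eq_mul]; ring

lemma fint (y a b : ℝ) :
    IntervalIntegrable (fun x => (if x < 1 then (-1:ℝ) else 1) * min (x+y) (2-(x+y))) volume a b := by
  apply IntervalIntegrable.mul_continuousOn
  · rw [intervalIntegrable_iff]
    apply MeasureTheory.Measure.integrableOn_of_bounded (M := 1) (measure_Ioc_lt_top).ne
    · exact (Measurable.ite measurableSet_Iio measurable_const measurable_const).aestronglyMeasurable
    · filter_upwards with x
      split <;> simp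
  · exact ((continuous_id.add continuous_const).min (by continuity)).continuousOn

lemma inner_le (y : ℝ) (h0 : 0 ≤ y) (h1 : y ≤ 1) :
    (∫ x in (0:ℝ)..(2 - y),
      (if x < 1 then (-1 : ℝ) else 1) * min (x + y) (2 - (x + y)))
    = (3*y^2 - 4*y)/2 := by
  rw [← intervalIntegral.integral_add_adjacent_intervals (a := 0) (b := 1-y) (c := 2-y)
      (fint y 0 (1-y)) (fint y (1-y) (2-y)),
    ← intervalIntegral.integral_add_adjacent_intervals (a := 1-y) (b := 1) (c := 2-y)
      (fint y (1-y) 1) (fint y 1 (2-y))]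
  have e1 : ∫ x in (0:ℝ)..(1-y),
      (if x < 1 then (-1 : ℝ) else 1) * min (x + y) (2 - (x + y)) =
      ∫ x in (0:ℝ)..(1-y), ((-1)*x + (-y)) := by
    apply key1 0 (1-y) 1
    intro x hx hne
    rw [Set.uIoc_of_le (by linarith)] at hx
    have hx1 : x < 1 := lt_of_le_of_ne (by linarith [hx.2]) hne
    rw [if_pos hx1, min_eq_left (by linarith [hx.2])]; ring
  have e2 : ∫ x in (1-y:ℝ)..1,
      (if x < 1 then (-1 : ℝ) else 1) * min (x + y) (2 - (x + y)) =
      ∫ x in (1-y:ℝ)..1, (1*x + (y-2)) := by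
    apply key1 (1-y) 1 1
    intro x hx hne
    rw [Set.uIoc_of_le (by linarith)] at hx
    have hx1 : x < 1 := lt_of_le_of_ne hx.2 hne
    rw [if_pos hx1, min_eq_right (by linarith [hx.1])]; ring
  have e3 : ∫ x in (1:ℝ)..(2-y),
      (if x < 1 then (-1 : ℝ) else 1) * min (x + y) (2 - (x + y)) =
      ∫ x in (1:ℝ)..(2-y), ((-1)*x + (2-y)) := by
    apply key1 1 (2-y) 1
    intro x hx hne
    rw [Set.uIoc_of_le (by linarith)] at hx
    have hx1 : ¬ (x < 1) := not_lt.mpr (le_of_lt hx.1)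
    rw [if_neg hx1, min_eq_right (by linarith [hx.1])]; ring
  rw [e1, e2, e3, key2, key2, key2]; ring

lemma inner_ge (y : ℝ) (h1 : 1 ≤ y) (h2 : y ≤ 2) :
    (∫ x in (0:ℝ)..(2 - y),
      (if x < 1 then (-1 : ℝ) else 1) * min (x + y) (2 - (x + y)))
    = -(2-y)^2/2 := by
  have e : ∫ x in (0:ℝ)..(2-y),
      (if x < 1 then (-1 : ℝ) else 1) * min (x + y) (2 - (x + y)) =
      ∫ x in (0:ℝ)..(2-y), (1*x + (y-2)) := by
    apply key1 0 (2-y) 1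
    intro x hx hne
    rw [Set.uIoc_of_le (by linarith)] at hx
    have hx1 : x < 1 := lt_of_le_of_ne (by linarith [hx.2]) hne
    rw [if_pos hx1, min_eq_right (by linarith [hx.1])]; ring
  rw [e, key2]; ring

lemma quartic1 : ∫ y in (0:ℝ)..1, ((3*y^2 - 4*y)/2)^2 = 17/60 := by
  have hF : ∀ y : ℝ, HasDerivAt (fun y : ℝ => 9*y^5/20 - 6*y^4/4 + 4*y^3/3)
      (((3*y^2 - 4*y)/2)^2) y := by
    intro y
    have := (((hasDerivAt_pow 5 y).const_mul (9/20 : ℝ)).sub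
      ((hasDerivAt_pow 4 y).const_mul (6/4 : ℝ))).add ((hasDerivAt_pow 3 y).const_mul (4/3 : ℝ))
    convert this using 1
    · rfl
    · rfl
    · ext z; simp; ring
    · push_cast; ring
  rw [intervalIntegral.integral_eq_sub_of_hasDerivAt (fun x _ => hF x)
    ((by continuity : Continuous fun y : ℝ => ((3*y^2 - 4*y)/2)^2).intervalIntegrable _ _)]
  norm_num

lemma quartic2 : ∫ y in (1:ℝ)..2, (-(2-y)^2/2)^2 = 1/20 := by
  have hF : ∀ y : ℝ, HasDerivAt (fun y : ℝ => -(2-y)^5/20)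
      ((-(2-y)^2/2)^2) y := by
    intro y
    have h2 : HasDerivAt (fun y : ℝ => 2 - y) (-1) y := by
      simpa using (hasDerivAt_id y).const_sub 2
    have := ((h2.pow 5).div_const 20).neg
    convert this using 1
    · rfl
    · rfl
    · ext z; simp; ring
    · push_cast; ring
  rw [intervalIntegral.integral_eq_sub_of_hasDerivAt (fun x _ => hF x)
    ((by continuity : Continuous fun y : ℝ => (-(2-y)^2/2)^2).intervalIntegrable _ _)]
  norm_num

/-- **Continuum cross-correlation integral of the sign profile `σ(x)` (`−1` on `[0,1)`,
`+1` on `[1,2)`) with the triangular profile `T(x) = min(x, 2−x)` (behind the constant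
`3/4` in Theorem 1 of the paper).**
With `φ(y) = ∫_0^{2−y} σ(x) T(x+y) dx` for `y ∈ [0,2]`, one has `∫_0^2 φ(y)² dy = 1/3`. -/
theorem stmt_19 :
    (∫ y in (0:ℝ)..2,
        (∫ x in (0:ℝ)..(2 - y),
          (if x < 1 then (-1 : ℝ) else 1) * min (x + y) (2 - (x + y))) ^ 2)
      = 1 / 3 := by
  have hG : ∫ y in (0:ℝ)..2,
      (∫ x in (0:ℝ)..(2 - y),
        (if x < 1 then (-1 : ℝ) else 1) * min (x + y) (2 - (x + y))) ^ 2
    = ∫ y in (0:ℝ)..2, (if y ≤ 1 then ((3*y^2 - 4*y)/2)^2 else (-(2-y)^2/2)^2) := by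
    apply intervalIntegral.integral_congr
    intro y hy
    rw [Set.uIcc_of_le (by norm_num)] at hy
    dsimp only
    by_cases h : y ≤ 1
    · rw [if_pos h, inner_le y hy.1 h]
    · rw [if_neg h, inner_ge y (le_of_not_ge h) hy.2]
  rw [hG]
  have hi1 : IntervalIntegrable
      (fun y => (if y ≤ 1 then ((3*y^2 - 4*y)/2)^2 else (-(2-y)^2/2)^2)) volume 0 1 := by
    apply IntervalIntegrable.congr_ae (f := fun y : ℝ => ((3*y^2 - 4*y)/2)^2)
      ((by continuity : Continuous fun y : ℝ => ((3*y^2 - 4*y)/2)^2).intervalIntegrable _ _)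
    rw [Set.uIoc_of_le (by norm_num)]
    apply (MeasureTheory.ae_restrict_iff' measurableSet_Ioc).mpr
    filter_upwards with x hx
    rw [if_pos hx.2]
  have hi2 : IntervalIntegrable
      (fun y => (if y ≤ 1 then ((3*y^2 - 4*y)/2)^2 else (-(2-y)^2/2)^2)) volume 1 2 := by
    apply IntervalIntegrable.congr_ae (f := fun y : ℝ => (-(2-y)^2/2)^2)
      ((by continuity : Continuous fun y : ℝ => (-(2-y)^2/2)^2).intervalIntegrable _ _)
    rw [Set.uIoc_of_le (by norm_num)]
    apply (MeasureTheory.ae_restrict_iff' measurableSet_Ioc).mpr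
    filter_upwards with x hx
    rw [if_neg (not_le.mpr hx.1)]
  rw [← intervalIntegral.integral_add_adjacent_intervals (a := 0) (b := 1) (c := 2) hi1 hi2]
  have e1 : ∫ y in (0:ℝ)..1, (if y ≤ 1 then ((3*y^2 - 4*y)/2)^2 else (-(2-y)^2/2)^2)
      = ∫ y in (0:ℝ)..1, ((3*y^2 - 4*y)/2)^2 := by
    apply intervalIntegral.integral_congr
    intro y hy
    rw [Set.uIcc_of_le (by norm_num)] at hy
    dsimp only
    rw [if_pos hy.2]
  have e2 : ∫ y in (1:ℝ)..2, (if y ≤ 1 then ((3*y^2 - 4*y)/2)^2 else (-(2-y)^2/2)^2)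
      = ∫ y in (1:ℝ)..2, (-(2-y)^2/2)^2 := by
    apply key1 1 2 1
    intro y hy hne
    rw [Set.uIoc_of_le (by norm_num)] at hy
    rw [if_neg (not_le.mpr hy.1)]
  rw [e1, e2, quartic1, quartic2]
  norm_num
end
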